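/- arXiv:2009.10157 — 3 statements merged into one kernel-verified Lean document; each statement's English description precedes it below -/
import Mathlib

section
/- Let S, I be an SIR solution with initial data (x, y), where x ≥ 0 and y ≥ μ. Then the set {t ≥ 0 : I(t) ≤ μ} is nonempty, it has a least element u(x, y), and I(u(x, y)) = μ. -/
/-!
Along an SIR solution `(S + I)' = -γ I`, so as long as `I` stays above `μ` the total
population `S + I` decreases at rate at least `γ μ`; since `S` stays nonnegative
(`S' = -β I S` preserves the sign of `S(0)`) and `I > μ > 0`, this cannot go on forever.
The set `{t ≥ 0 | I t ≤ μ}` is then nonempty and closed, hence has a least element, at which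
`I = μ` by the intermediate value theorem because `I 0 ≥ μ`.
-/

open Set Filter

/-- An SIR solution with parameters β, γ and initial data (x, y):
differentiable functions S, I on [0,∞) with S' = -βSI, I' = βSI - γI,
S(0) = x, I(0) = y. -/
def IsSIRSolution (β γ x y : ℝ) (S I : ℝ → ℝ) : Prop :=
  S 0 = x ∧ I 0 = y ∧
  ∀ t, 0 ≤ t →
    HasDerivWithinAt S (-(β * S t * I t)) (Set.Ici 0) t ∧
    HasDerivWithinAt I (β * S t * I t - γ * I t) (Set.Ici 0) t

open Real

/-- Integrating factor: `f t * exp (-∫ a..t, g)` has zero derivative. -/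
lemma eq_mul_exp_integral_of_hasDerivWithinAt {f g : ℝ → ℝ} {a T : ℝ} (hg : Continuous g)
    (hf : ∀ t ∈ Ici a, HasDerivWithinAt f (g t * f t) (Ici a) t) (hT : a ≤ T) :
    f T = f a * exp (∫ s in a..T, g s) := by
  set G : ℝ → ℝ := fun t => ∫ s in a..t, g s
  have hG : ∀ t, HasDerivAt G (g t) t := fun t => (hg.integral_hasStrictDerivAt a t).hasDerivAt
  have hE : ∀ t ∈ Ici a, HasDerivWithinAt (fun t => f t * exp (-G t)) 0 (Ici a) t := fun t ht =>
    ((hf t ht).mul (hG t).neg.exp.hasDerivWithinAt).congr_deriv (by ring)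
  have hconst := constant_of_has_deriv_right_zero
    (fun t ht => (hE t ht.1).continuousWithinAt.mono Icc_subset_Ici_self)
    (fun t ht => (hE t ht.1).mono (Ici_subset_Ici.2 ht.1)) T ⟨hT, le_rfl⟩
  simp only [G, intervalIntegral.integral_same, neg_zero, exp_zero, mul_one] at hconst
  rw [← hconst, mul_assoc, ← exp_add, neg_add_cancel, exp_zero, mul_one]

lemma exists_isLeast_and_eq_of_continuousOn {f : ℝ → ℝ} {a μ : ℝ} (hf : ContinuousOn f (Ici a))
    (ha : μ ≤ f a) (hne : {t | a ≤ t ∧ f t ≤ μ}.Nonempty) :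
    ∃ u, IsLeast {t | a ≤ t ∧ f t ≤ μ} u ∧ f u = μ := by
  have hclosed : IsClosed {t | a ≤ t ∧ f t ≤ μ} :=
    hf.preimage_isClosed_of_isClosed isClosed_Ici isClosed_Iic
  have hleast := hclosed.isLeast_csInf hne ⟨a, fun t ht => ht.1⟩
  refine ⟨_, hleast, ?_⟩
  obtain ⟨c, hc, hfc⟩ :=
    intermediate_value_Icc' hleast.1.1 (hf.mono Icc_subset_Ici_self) ⟨hleast.1.2, ha⟩
  rwa [← le_antisymm hc.2 (hleast.2 ⟨hc.1, hfc.le⟩)]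

namespace IsSIRSolution

variable {β γ x y : ℝ} {S I : ℝ → ℝ}

lemma continuousOn_I (h : IsSIRSolution β γ x y S I) : ContinuousOn I (Ici 0) :=
  fun t ht => (h.2.2 t ht).2.continuousWithinAt

lemma S_nonneg (h : IsSIRSolution β γ x y S I) (hx : 0 ≤ x) {t : ℝ} (ht : 0 ≤ t) : 0 ≤ S t := by
  set J : ℝ → ℝ := fun s => I (max s 0)
  have hJ : Continuous J :=
    h.continuousOn_I.comp_continuous (continuous_id.max continuous_const) fun s => le_max_right s 0
  have hS : ∀ s ∈ Ici (0 : ℝ), HasDerivWithinAt S (-(β * J s) * S s) (Ici 0) s := fun s hs => by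
    convert (h.2.2 s hs).1 using 1
    simp only [J, max_eq_left (mem_Ici.1 hs)]
    ring
  rw [eq_mul_exp_integral_of_hasDerivWithinAt (continuous_const.mul hJ).neg hS ht, h.1]
  exact mul_nonneg hx (exp_pos _).le

lemma exists_I_le (h : IsSIRSolution β γ x y S I) (hγ : 0 < γ) {μ : ℝ} (hμ : 0 < μ)
    (hx : 0 ≤ x) : ∃ t, 0 ≤ t ∧ I t ≤ μ := by
  by_contra! hI
  have hderiv : ∀ t ∈ Ici (0 : ℝ), HasDerivWithinAt (fun t => S t + I t + γ * μ * t)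
      (γ * (μ - I t)) (Ici 0) t := fun t ht =>
    (((h.2.2 t ht).1.add (h.2.2 t ht).2).add
      ((hasDerivWithinAt_id t _).const_mul (γ * μ))).congr_deriv (by ring)
  have hanti : AntitoneOn (fun t => S t + I t + γ * μ * t) (Ici 0) :=
    antitoneOn_of_hasDerivWithinAt_nonpos (convex_Ici 0) (f' := fun t => γ * (μ - I t))
      (fun t ht => (hderiv t ht).continuousWithinAt)
      (fun t ht => (hderiv t (interior_subset ht)).mono interior_subset)
      (fun t ht => by nlinarith [hI t (interior_subset ht)])
  have hy : 0 < y := h.2.1 ▸ hμ.trans (hI 0 le_rfl)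
  set T := (x + y) / (γ * μ)
  have hT : 0 ≤ T := by positivity
  have hdecay : S T + I T + γ * μ * T ≤ x + y := by
    simpa [h.1, h.2.1] using hanti (mem_Ici.2 le_rfl) hT hT
  rw [mul_div_cancel₀ _ (by positivity)] at hdecay
  linarith [h.S_nonneg hx hT, hI T hT]

end IsSIRSolution

theorem stmt_2_general (β γ μ x y : ℝ) (hγ : 0 < γ) (hμ : 0 < μ)
    (hx : 0 ≤ x) (hy : μ ≤ y)
    (S I : ℝ → ℝ) (hSI : IsSIRSolution β γ x y S I) :
    {t : ℝ | 0 ≤ t ∧ I t ≤ μ}.Nonempty ∧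
    ∃ u : ℝ, IsLeast {t : ℝ | 0 ≤ t ∧ I t ≤ μ} u ∧ I u = μ := by
  have hne : {t : ℝ | 0 ≤ t ∧ I t ≤ μ}.Nonempty := hSI.exists_I_le hγ hμ hx
  exact ⟨hne, exists_isLeast_and_eq_of_continuousOn hSI.continuousOn_I (hSI.2.1 ▸ hy) hne⟩

theorem stmt_2 (β γ μ x y : ℝ) (hβ : 0 < β) (hγ : 0 < γ) (hμ : 0 < μ)
    (hx : 0 ≤ x) (hy : μ ≤ y)
    (S I : ℝ → ℝ) (hSI : IsSIRSolution β γ x y S I) :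
    {t : ℝ | 0 ≤ t ∧ I t ≤ μ}.Nonempty ∧
    ∃ u : ℝ, IsLeast {t : ℝ | 0 ≤ t ∧ I t ≤ μ} u ∧ I u = μ :=
  stmt_2_general β γ μ x y hγ hμ hx hy S I hSI
end

section
/- Suppose w : [γ/β,∞) × (0,∞) → ℝ is continuous, is continuously differentiable on (γ/β,∞) × (0,∞) where it satisfies the partial differential equation β x y ∂ₓw(x,y) + (γ − β x) y ∂_y w(x,y) = 1, and satisfies the boundary condition w(γ/β, y) = 0 for all y > 0. Then for every x > γ/β and y > 0, w(x, y) = v(x, y), the first time that the susceptible population of the SIR solution with initial data (x, y) falls below γ/β. In particular, such a solution w of the boundary-value problem is unique. -/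
/-!
Along an SIR trajectory the vector field `(-βSI, βSI - γI)` is exactly the characteristic field
of the PDE, so the PDE says `t ↦ w (S t, I t)` decreases with unit speed as long as the trajectory
stays in `S > γ/β, I > 0`. The infected population never vanishes (integrating factor
`exp ∫ (βS - γ)`), so the trajectory reaches the boundary `S = γ/β` exactly at time `v`, where
`w = 0`; hence `w (x, y) = v`.
-/

open Set Filter

section LinearODE

variable {f a : ℝ → ℝ} {t₀ : ℝ}

theorem hasDerivWithinAt_integral_Ici (ha : ContinuousOn a (Ici t₀)) {t : ℝ} (ht : t₀ ≤ t) :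
    HasDerivWithinAt (fun u => ∫ s in t₀..u, a s) (a t) (Ici t) t := by
  have hsub : Ioi t ⊆ Ici t₀ := fun s hs => ht.trans (le_of_lt hs)
  refine intervalIntegral.integral_hasDerivWithinAt_right ?_ ?_ ((ha t ht).mono hsub)
  · exact (ha.mono fun s hs => by rw [uIcc_of_le ht] at hs; exact hs.1).intervalIntegrable
  · exact (ha.mono hsub).stronglyMeasurableAtFilter_nhdsWithin measurableSet_Ioi t

theorem eq_mul_exp_integral_of_hasDerivWithinAt_s13 (ha : ContinuousOn a (Ici t₀))
    (hf : ∀ t, t₀ ≤ t → HasDerivWithinAt f (a t * f t) (Ici t₀) t) {t : ℝ} (ht : t₀ ≤ t) :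
    f t = f t₀ * Real.exp (∫ s in t₀..t, a s) := by
  set A : ℝ → ℝ := fun u => ∫ s in t₀..u, a s
  have hA : ∀ u, t₀ ≤ u → HasDerivWithinAt A (a u) (Ici u) u := fun u hu =>
    hasDerivWithinAt_integral_Ici ha hu
  have hAcont : ContinuousOn A (Icc t₀ t) := by
    have hint : MeasureTheory.IntegrableOn a (uIcc t₀ t) := by
      rw [uIcc_of_le ht]
      exact (ha.mono Icc_subset_Ici_self).integrableOn_Icc
    rw [← uIcc_of_le ht]
    exact intervalIntegral.continuousOn_primitive_interval hint
  have hconst := constant_of_has_deriv_right_zero (a := t₀) (b := t)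
    (f := fun u => f u * Real.exp (-A u)) ?_ ?_ t ⟨ht, le_rfl⟩
  · simp only [A, intervalIntegral.integral_same, neg_zero, Real.exp_zero, mul_one] at hconst
    rw [← hconst, mul_assoc, ← Real.exp_add, neg_add_cancel, Real.exp_zero, mul_one]
  · have hfcont : ContinuousOn f (Icc t₀ t) := fun u hu =>
      (hf u hu.1).continuousWithinAt.mono Icc_subset_Ici_self
    exact hfcont.mul (Real.continuous_exp.comp_continuousOn hAcont.neg)
  · intro u hu
    have hfu := (hf u hu.1).mono (Ici_subset_Ici.mpr hu.1)
    have hE : HasDerivWithinAt (fun u => Real.exp (-A u)) (Real.exp (-A u) * -a u) (Ici u) u :=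
      (hA u hu.1).neg.exp
    have h := hfu.mul hE
    rwa [show a u * f u * Real.exp (-A u) + f u * (Real.exp (-A u) * -a u) = 0 by ring] at h

end LinearODE

theorem IsSIRSolution.infected_pos {β γ x y : ℝ} {S I : ℝ → ℝ} (h : IsSIRSolution β γ x y S I)
    (hy : 0 < y) {t : ℝ} (ht : 0 ≤ t) : 0 < I t := by
  obtain ⟨-, hI0, hode⟩ := h
  have hS : ContinuousOn S (Ici 0) := fun s hs => (hode s hs).1.continuousWithinAt
  have hI' : ∀ s, 0 ≤ s → HasDerivWithinAt I ((β * S s - γ) * I s) (Ici 0) s := fun s hs => by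
    simpa only [sub_mul] using (hode s hs).2
  rw [eq_mul_exp_integral_of_hasDerivWithinAt_s13 ((continuousOn_const.mul hS).sub continuousOn_const)
    hI' ht, hI0]
  positivity

section HittingTime

variable {f : ℝ → ℝ} {c v : ℝ}

theorem lt_apply_of_lt_isLeast_hittingTime (hv : IsLeast {t | 0 ≤ t ∧ f t ≤ c} v) {t : ℝ}
    (ht₀ : 0 ≤ t) (htv : t < v) : c < f t :=
  lt_of_not_ge fun hle => (hv.2 ⟨ht₀, hle⟩).not_gt htv

theorem apply_isLeast_hittingTime_eq (hv : IsLeast {t | 0 ≤ t ∧ f t ≤ c} v)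
    (hf : ContinuousOn f (Icc 0 v)) (h0 : c < f 0) : f v = c := by
  refine le_antisymm hv.1.2 (not_lt.1 fun hlt => ?_)
  obtain ⟨t, ht, hft⟩ := intermediate_value_Icc' hv.1.1 hf ⟨hlt.le, h0.le⟩
  rw [le_antisymm ht.2 (hv.2 ⟨ht.1, hft.le⟩)] at hft
  exact hlt.ne hft

theorem le_apply_of_mem_Icc_isLeast_hittingTime (hv : IsLeast {t | 0 ≤ t ∧ f t ≤ c} v)
    (hf : ContinuousOn f (Icc 0 v)) (h0 : c < f 0) {t : ℝ} (ht : t ∈ Icc 0 v) : c ≤ f t := by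
  rcases ht.2.lt_or_eq with htv | rfl
  · exact (lt_apply_of_lt_isLeast_hittingTime hv ht.1 htv).le
  · exact (apply_isLeast_hittingTime_eq hv hf h0).ge

end HittingTime

theorem ContinuousLinearMap.apply_prod_eq {M : Type*} [AddCommGroup M] [Module ℝ M]
    [TopologicalSpace M] (L : ℝ × ℝ →L[ℝ] M) (a b : ℝ) :
    L (a, b) = a • L (1, 0) + b • L (0, 1) := by
  rw [← map_smul, ← map_smul, ← map_add]
  simp

theorem hasDerivWithinAt_comp_sir_of_pde {β γ : ℝ} {w : ℝ × ℝ → ℝ} {L : ℝ × ℝ →L[ℝ] ℝ}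
    {S I : ℝ → ℝ} {u : Set ℝ} {t : ℝ} (hw : HasFDerivAt w L (S t, I t))
    (hpde : β * S t * I t * L (1, 0) + (γ - β * S t) * I t * L (0, 1) = 1)
    (hS : HasDerivWithinAt S (-(β * S t * I t)) u t)
    (hI : HasDerivWithinAt I (β * S t * I t - γ * I t) u t) :
    HasDerivWithinAt (fun s => w (S s, I s)) (-1) u t := by
  refine (hw.comp_hasDerivWithinAt t (hS.prodMk hI)).congr_deriv ?_
  rw [ContinuousLinearMap.apply_prod_eq, smul_eq_mul, smul_eq_mul]
  linear_combination -hpde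

theorem stmt_13_general (β γ : ℝ)
    (w : ℝ × ℝ → ℝ)
    (hw_cont : ContinuousOn w (Set.Ici (γ / β) ×ˢ Set.Ioi 0))
    (hw_diff : ContDiffOn ℝ 1 w (Set.Ioi (γ / β) ×ˢ Set.Ioi 0))
    (hw_pde : ∀ p ∈ (Set.Ioi (γ / β)) ×ˢ (Set.Ioi (0:ℝ)),
      β * p.1 * p.2 * fderiv ℝ w p (1, 0) +
        (γ - β * p.1) * p.2 * fderiv ℝ w p (0, 1) = 1)
    (hw_bc : ∀ y : ℝ, 0 < y → w (γ / β, y) = 0)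
    (x y : ℝ) (hx : γ / β < x) (hy : 0 < y)
    (S I : ℝ → ℝ) (hSI : IsSIRSolution β γ x y S I)
    (v : ℝ) (hv : IsLeast {t : ℝ | 0 ≤ t ∧ S t ≤ γ / β} v) :
    w (x, y) = v := by
  obtain ⟨hS0, hI0, hode⟩ := hSI
  have hIpos : ∀ t, 0 ≤ t → 0 < I t := fun t => IsSIRSolution.infected_pos ⟨hS0, hI0, hode⟩ hy
  have hS : ContinuousOn S (Icc 0 v) := fun t ht =>
    (hode t ht.1).1.continuousWithinAt.mono Icc_subset_Ici_self
  have hI : ContinuousOn I (Icc 0 v) := fun t ht =>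
    (hode t ht.1).2.continuousWithinAt.mono Icc_subset_Ici_self
  have hSx : γ / β < S 0 := hS0 ▸ hx
  have hderiv : ∀ t ∈ Ico 0 v, HasDerivWithinAt (fun t => w (S t, I t)) (-1) (Ici t) t := by
    intro t ht
    have hp : (S t, I t) ∈ Ioi (γ / β) ×ˢ Ioi (0 : ℝ) :=
      ⟨lt_apply_of_lt_isLeast_hittingTime hv ht.1 ht.2, hIpos t ht.1⟩
    have hw : HasFDerivAt w (fderiv ℝ w (S t, I t)) (S t, I t) :=
      ((hw_diff.differentiableOn one_ne_zero).differentiableAt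
        ((isOpen_Ioi.prod isOpen_Ioi).mem_nhds hp)).hasFDerivAt
    exact hasDerivWithinAt_comp_sir_of_pde hw (hw_pde _ hp)
      ((hode t ht.1).1.mono (Ici_subset_Ici.2 ht.1)) ((hode t ht.1).2.mono (Ici_subset_Ici.2 ht.1))
  have hdecay : w (S v, I v) = w (x, y) - v :=
    eq_of_has_deriv_right_eq hderiv (fun t _ => (hasDerivWithinAt_id t _).const_sub _)
      (hw_cont.comp (hS.prodMk hI) fun t ht =>
        ⟨le_apply_of_mem_Icc_isLeast_hittingTime hv hS hSx ht, hIpos t ht.1⟩)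
      (continuousOn_const.sub continuousOn_id) (by simp [hS0, hI0]) v ⟨hv.1.1, le_rfl⟩
  rw [apply_isLeast_hittingTime_eq hv hS hSx, hw_bc _ (hIpos v hv.1.1)] at hdecay
  linarith

theorem stmt_13 (β γ : ℝ) (hβ : 0 < β) (hγ : 0 < γ)
    (w : ℝ × ℝ → ℝ)
    (hw_cont : ContinuousOn w (Set.Ici (γ / β) ×ˢ Set.Ioi 0))
    (hw_diff : ContDiffOn ℝ 1 w (Set.Ioi (γ / β) ×ˢ Set.Ioi 0))
    (hw_pde : ∀ p ∈ (Set.Ioi (γ / β)) ×ˢ (Set.Ioi (0:ℝ)),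
      β * p.1 * p.2 * fderiv ℝ w p (1, 0) +
        (γ - β * p.1) * p.2 * fderiv ℝ w p (0, 1) = 1)
    (hw_bc : ∀ y : ℝ, 0 < y → w (γ / β, y) = 0)
    (x y : ℝ) (hx : γ / β < x) (hy : 0 < y)
    (S I : ℝ → ℝ) (hSI : IsSIRSolution β γ x y S I)
    (v : ℝ) (hv : IsLeast {t : ℝ | 0 ≤ t ∧ S t ≤ γ / β} v) :
    w (x, y) = v :=
  stmt_13_general β γ w hw_cont hw_diff hw_pde hw_bc x y hx hy S I hSI v hv
end

section
/- Let x > γ/β and y > 0, and let S, I be the SIR solution with initial data (x, y). Then v(x, y) ≤ [ln x − ln(γ/β) − ln y + ln(x − γ/β + y − (γ/β)(ln x − ln(γ/β)))] / [β (y + x (1 − (γ/β) (ln x − ln(γ/β))/(x − γ/β)))] and v(x, y) ≥ [ln x − ln(γ/β) − ln y + ln(x − γ/β + y + (γ/β)(γ/(β x) − 1))] / [β (x − γ/β + y)]. -/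
/-!
Write `ρ = γ / β`. Up to the time `v` the solution stays in the region `ρ ≤ S ≤ x`, `I > 0`,
and the conserved quantity `S + I - ρ log S` makes `I` a concave function of `S` along the
orbit. It lies below its tangent at `S = x` and above its chord over `[ρ, x]`, so `I` is
squeezed between two linear functions `A - k S`. For such a function,
`log S - log (A - k S) + β A t` has derivative `β A (1 - I / (A - k S))`, whose sign is fixed
by the comparison; evaluating it at `0` and at `v`, where `S v = ρ`, gives the two bounds.
-/

open Set Filter

open Real Topology

section RightDerivatives

variable {f f' : ℝ → ℝ} {a b : ℝ}

theorem continuousOn_Icc_of_hasDerivWithinAt_Ici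
    (hf : ∀ t ∈ Icc a b, HasDerivWithinAt f (f' t) (Ici a) t) : ContinuousOn f (Icc a b) :=
  fun t ht => (hf t ht).continuousWithinAt.mono Icc_subset_Ici_self

theorem monotoneOn_Icc_of_hasDerivWithinAt_Ici
    (hf : ∀ t ∈ Icc a b, HasDerivWithinAt f (f' t) (Ici a) t)
    (hf' : ∀ t ∈ Ioo a b, 0 ≤ f' t) :
    MonotoneOn f (Icc a b) := by
  refine monotoneOn_of_hasDerivWithinAt_nonneg (convex_Icc a b)
    (continuousOn_Icc_of_hasDerivWithinAt_Ici hf) ?_ (by rwa [interior_Icc])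
  rw [interior_Icc]
  exact fun t ht => (hf t (Ioo_subset_Icc_self ht)).mono
    (Ioo_subset_Ioi_self.trans Ioi_subset_Ici_self)

theorem antitoneOn_Icc_of_hasDerivWithinAt_Ici
    (hf : ∀ t ∈ Icc a b, HasDerivWithinAt f (f' t) (Ici a) t)
    (hf' : ∀ t ∈ Ioo a b, f' t ≤ 0) :
    AntitoneOn f (Icc a b) := by
  refine antitoneOn_of_hasDerivWithinAt_nonpos (convex_Icc a b)
    (continuousOn_Icc_of_hasDerivWithinAt_Ici hf) ?_ (by rwa [interior_Icc])
  rw [interior_Icc]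
  exact fun t ht => (hf t (Ioo_subset_Icc_self ht)).mono
    (Ioo_subset_Ioi_self.trans Ioi_subset_Ici_self)

theorem eq_of_hasDerivWithinAt_Ici_zero (hf : ∀ t ∈ Icc a b, HasDerivWithinAt f 0 (Ici a) t) :
    ∀ t ∈ Icc a b, f t = f a :=
  constant_of_has_deriv_right_zero (continuousOn_Icc_of_hasDerivWithinAt_Ici hf)
    fun t ht => (hf t (Ico_subset_Icc_self ht)).mono (Ici_subset_Ici.2 ht.1)

-- Barrier argument: `f` stays above `f a * exp (a - t)`, which decreases where the two meet.
theorem pos_of_hasDerivWithinAt_Ici (hf : ∀ t ∈ Icc a b, HasDerivWithinAt f (f' t) (Ici a) t)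
    (ha : 0 < f a) (hf' : ∀ t ∈ Ico a b, 0 < f t → 0 ≤ f' t) :
    ∀ t ∈ Icc a b, 0 < f t := by
  have hB : ∀ t, HasDerivAt (fun s => -(f a * exp (a - s))) (f a * exp (a - t)) t := fun t => by
    simpa using (((hasDerivAt_id t).const_sub a).exp.const_mul (f a)).fun_neg
  have hbarrier := image_le_of_deriv_right_lt_deriv_boundary' (f := fun t => -f t)
    (f' := fun t => -f' t)
    (continuousOn_Icc_of_hasDerivWithinAt_Ici hf).neg
    (fun t ht => ((hf t (Ico_subset_Icc_self ht)).mono (Ici_subset_Ici.2 ht.1)).fun_neg)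
    (by simp) (fun t _ => (hB t).continuousAt.continuousWithinAt)
    (fun t _ => (hB t).hasDerivWithinAt) (fun t ht heq => by
      have hft : 0 < f t := by rw [neg_inj.1 heq]; positivity
      linarith [hf' t ht hft, mul_pos ha (exp_pos (a - t))])
  intro t ht
  have := hbarrier ht
  simp only [neg_le_neg_iff] at this
  exact lt_of_lt_of_le (by positivity) this

end RightDerivatives

theorem Real.log_sub_mul_le_log {a b s : ℝ} (ha : 0 < a) (hab : a < b) (has : a ≤ s)
    (hsb : s ≤ b) :
    log b - (b - s) / (b - a) * (log b - log a) ≤ log s := by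
  have hba : 0 < b - a := sub_pos.2 hab
  have hconc := strictConcaveOn_log_Ioi.concaveOn.2 (mem_Ioi.2 ha) (mem_Ioi.2 (ha.trans hab))
    (div_nonneg (sub_nonneg.2 hsb) hba.le) (div_nonneg (sub_nonneg.2 has) hba.le)
    (by field_simp; ring)
  have hs : (b - s) / (b - a) * a + (s - a) / (b - a) * b = s := by field_simp; ring
  simp only [smul_eq_mul, hs] at hconc
  have hw : (s - a) / (b - a) = 1 - (b - s) / (b - a) := by field_simp; ring
  rw [hw] at hconc
  linarith

theorem Real.mul_log_sub_log_lt {a b : ℝ} (ha : 0 < a) (hab : a < b) :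
    a * (log b - log a) < b - a := by
  have h := log_lt_sub_one_of_pos (div_pos (ha.trans hab) ha) ((one_lt_div ha).2 hab).ne'
  rw [log_div (ha.trans hab).ne' ha.ne', lt_sub_iff_add_lt, lt_div_iff₀ ha] at h
  linarith

theorem hasDerivWithinAt_log_sub_log_linear {S : ℝ → ℝ} {s : Set ℝ} {t β c A k : ℝ}
    (hS : HasDerivWithinAt S (-(β * S t * c)) s t) (hS0 : S t ≠ 0) (hA : A - k * S t ≠ 0) :
    HasDerivWithinAt (fun u => log (S u) - log (A - k * S u) + β * A * u)
      (β * A * (1 - c / (A - k * S t))) s t := by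
  refine (((hS.log hS0).sub (((hS.const_mul k).const_sub A).log hA)).add
    ((hasDerivWithinAt_id t s).const_mul (β * A))).congr_deriv ?_
  rw [mul_comm k] at hA
  field_simp
  ring

theorem lt_apply_of_isLeast_sublevel {f : ℝ → ℝ} {c v t : ℝ}
    (hv : IsLeast {t | 0 ≤ t ∧ f t ≤ c} v) (ht : t ∈ Ico 0 v) : c < f t :=
  not_le.1 fun h => (hv.2 ⟨ht.1, h⟩).not_gt ht.2

theorem ContinuousOn.apply_eq_of_isLeast_sublevel {f : ℝ → ℝ} {c v : ℝ}
    (hf : ContinuousOn f (Ici 0)) (h0 : c < f 0) (hv : IsLeast {t | 0 ≤ t ∧ f t ≤ c} v) :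
    f v = c := by
  have hv0 : 0 < v := hv.1.1.lt_of_ne (by rintro rfl; exact h0.not_ge hv.1.2)
  have : (𝓝[Ioo 0 v] v).NeBot := by rw [nhdsWithin_Ioo_eq_nhdsLT hv0]; infer_instance
  refine hv.1.2.antisymm <|
    ge_of_tendsto ((hf v hv.1.1).mono fun t (ht : t ∈ Ioo 0 v) => ht.1.le) ?_
  filter_upwards [self_mem_nhdsWithin] with t ht
  exact (lt_apply_of_isLeast_sublevel hv (Ioo_subset_Ico_self ht)).le

-- The orbit through `(x, y)` in the `(S, I)`-plane, written as `I` over `S` (with `ρ = γ / β`).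
noncomputable def sirOrbit (ρ x y s : ℝ) : ℝ := x + y - s + ρ * (log s - log x)

theorem sirOrbit_le {ρ x y s : ℝ} (hρ : 0 ≤ ρ) (hx : 0 < x) (hs : 0 < s) :
    sirOrbit ρ x y s ≤ x - ρ + y - (x - ρ) / x * s := by
  have h := log_le_sub_one_of_pos (div_pos hs hx)
  rw [log_div hs.ne' hx.ne'] at h
  have : (x - ρ) / x * s = s - ρ * (s / x) := by field_simp
  rw [sirOrbit, this]
  nlinarith

theorem le_sirOrbit {ρ x y s : ℝ} (hρ : 0 < ρ) (hρx : ρ < x) (hs : s ∈ Icc ρ x) :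
    y + x * (1 - ρ * (log x - log ρ) / (x - ρ)) - (1 - ρ * (log x - log ρ) / (x - ρ)) * s ≤
      sirOrbit ρ x y s := by
  have h := mul_le_mul_of_nonneg_left (log_sub_mul_le_log hρ hρx hs.1 hs.2) hρ.le
  have : y + x * (1 - ρ * (log x - log ρ) / (x - ρ)) -
      (1 - ρ * (log x - log ρ) / (x - ρ)) * s =
      x + y - s - ρ * ((x - s) / (x - ρ) * (log x - log ρ)) := by ring
  rw [sirOrbit, this]
  linarith

namespace IsSIRSolution

variable {β γ x y v : ℝ} {S I : ℝ → ℝ}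

theorem continuousOn_S (h : IsSIRSolution β γ x y S I) : ContinuousOn S (Ici 0) :=
  fun t ht => (h.2.2 t ht).1.continuousWithinAt

theorem I_pos (h : IsSIRSolution β γ x y S I) (hy : 0 < y)
    (hS : ∀ t ∈ Icc 0 v, γ ≤ β * S t) :
    ∀ t ∈ Icc 0 v, 0 < I t :=
  pos_of_hasDerivWithinAt_Ici (fun t ht => (h.2.2 t ht.1).2) (h.2.1 ▸ hy) fun t ht hIt => by
    nlinarith [mul_nonneg (sub_nonneg.2 (hS t (Ico_subset_Icc_self ht))) hIt.le]

theorem S_le (h : IsSIRSolution β γ x y S I) (hβ : 0 ≤ β) (hS : ∀ t ∈ Icc 0 v, 0 ≤ S t)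
    (hI : ∀ t ∈ Icc 0 v, 0 ≤ I t) : ∀ t ∈ Icc 0 v, S t ≤ x := by
  intro t ht
  have hanti := antitoneOn_Icc_of_hasDerivWithinAt_Ici (fun t ht => (h.2.2 t ht.1).1)
    fun t ht => neg_nonpos.2 <| mul_nonneg (mul_nonneg hβ (hS t (Ioo_subset_Icc_self ht)))
      (hI t (Ioo_subset_Icc_self ht))
  simpa only [h.1] using hanti ⟨le_rfl, ht.1.trans ht.2⟩ ht ht.1

theorem I_eq_sirOrbit (h : IsSIRSolution β γ x y S I) (hβ : β ≠ 0)
    (hS : ∀ t ∈ Icc 0 v, 0 < S t) : ∀ t ∈ Icc 0 v, I t = sirOrbit (γ / β) x y (S t) := by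
  have hW : ∀ t ∈ Icc 0 v,
      HasDerivWithinAt (fun u => S u + I u - γ / β * log (S u)) 0 (Ici 0) t := by
    intro t ht
    obtain ⟨hSd, hId⟩ := h.2.2 t ht.1
    have hSt := (hS t ht).ne'
    refine ((hSd.add hId).sub ((hSd.log hSt).const_mul (γ / β))).congr_deriv ?_
    field_simp
    ring
  intro t ht
  have := eq_of_hasDerivWithinAt_Ici_zero hW t ht
  simp only [h.1, h.2.1] at this
  rw [sirOrbit]
  linarith

theorem le_time_of_I_le (h : IsSIRSolution β γ x y S I) {A k : ℝ} (hβA : 0 < β * A)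
    (hv : 0 ≤ v) (hS : ∀ t ∈ Icc 0 v, 0 < S t) (hI : ∀ t ∈ Icc 0 v, 0 < I t)
    (hIA : ∀ t ∈ Icc 0 v, I t ≤ A - k * S t) :
    (log (S 0) - log (S v) - log (A - k * S 0) + log (A - k * S v)) / (β * A) ≤ v := by
  have hA t (ht : t ∈ Icc 0 v) : 0 < A - k * S t := (hI t ht).trans_le (hIA t ht)
  have hmono := monotoneOn_Icc_of_hasDerivWithinAt_Ici
    (fun t ht => hasDerivWithinAt_log_sub_log_linear (h.2.2 t ht.1).1 (hS t ht).ne'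
      (hA t ht).ne')
    fun t ht => mul_nonneg hβA.le <| sub_nonneg.2 <|
      (div_le_one (hA t (Ioo_subset_Icc_self ht))).2 (hIA t (Ioo_subset_Icc_self ht))
  have := hmono ⟨le_rfl, hv⟩ ⟨hv, le_rfl⟩ hv
  rw [div_le_iff₀ hβA]
  simp only [mul_zero, add_zero] at this
  linarith

theorem time_le_of_le_I (h : IsSIRSolution β γ x y S I) {A k : ℝ} (hβA : 0 < β * A)
    (hv : 0 ≤ v) (hS : ∀ t ∈ Icc 0 v, 0 < S t) (hA : ∀ t ∈ Icc 0 v, 0 < A - k * S t)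
    (hAI : ∀ t ∈ Icc 0 v, A - k * S t ≤ I t) :
    v ≤ (log (S 0) - log (S v) - log (A - k * S 0) + log (A - k * S v)) / (β * A) := by
  have hanti := antitoneOn_Icc_of_hasDerivWithinAt_Ici
    (fun t ht => hasDerivWithinAt_log_sub_log_linear (h.2.2 t ht.1).1 (hS t ht).ne'
      (hA t ht).ne')
    fun t ht => mul_nonpos_of_nonneg_of_nonpos hβA.le <| sub_nonpos.2 <|
      (one_le_div (hA t (Ioo_subset_Icc_self ht))).2 (hAI t (Ioo_subset_Icc_self ht))
  have := hanti ⟨le_rfl, hv⟩ ⟨hv, le_rfl⟩ hv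
  rw [le_div_iff₀ hβA]
  simp only [mul_zero, add_zero] at this
  linarith

end IsSIRSolution

theorem stmt_16 (β γ x y : ℝ) (hβ : 0 < β) (hγ : 0 < γ)
    (hx : γ / β < x) (hy : 0 < y)
    (S I : ℝ → ℝ) (hSI : IsSIRSolution β γ x y S I)
    (v : ℝ) (hv : IsLeast {t : ℝ | 0 ≤ t ∧ S t ≤ γ / β} v) :
    v ≤ (Real.log x - Real.log (γ / β) - Real.log y +
          Real.log (x - γ / β + y - (γ / β) * (Real.log x - Real.log (γ / β)))) /
        (β * (y + x * (1 - (γ / β) * (Real.log x - Real.log (γ / β)) / (x - γ / β)))) ∧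
    (Real.log x - Real.log (γ / β) - Real.log y +
          Real.log (x - γ / β + y + (γ / β) * (γ / (β * x) - 1))) /
        (β * (x - γ / β + y)) ≤ v := by
  have hρ : 0 < γ / β := div_pos hγ hβ
  have hSv : S v = γ / β := hSI.continuousOn_S.apply_eq_of_isLeast_sublevel (hSI.1 ▸ hx) hv
  have hρS : ∀ t ∈ Icc 0 v, γ / β ≤ S t := fun t ht => ht.2.lt_or_eq.elim
    (fun h => (lt_apply_of_isLeast_sublevel hv ⟨ht.1, h⟩).le) fun h => (h ▸ hSv).ge
  have hSpos : ∀ t ∈ Icc 0 v, 0 < S t := fun t ht => hρ.trans_le (hρS t ht)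
  have hIpos := hSI.I_pos hy fun t ht => (div_le_iff₀' hβ).1 (hρS t ht)
  have hSx := hSI.S_le hβ.le (fun t ht => (hSpos t ht).le) fun t ht => (hIpos t ht).le
  have hI := hSI.I_eq_sirOrbit hβ.ne' hSpos
  have hx0 : 0 < x := hρ.trans hx
  constructor
  · have hxρ : 0 < x - γ / β := sub_pos.2 hx
    set k := 1 - γ / β * (log x - log (γ / β)) / (x - γ / β) with hk_def
    have hk : 0 < k := sub_pos.2 <| (div_lt_one hxρ).2 (mul_log_sub_log_lt hρ hx)
    have hAI t (ht : t ∈ Icc 0 v) : y + x * k - k * S t ≤ I t :=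
      hI t ht ▸ le_sirOrbit hρ hx ⟨hρS t ht, hSx t ht⟩
    have := hSI.time_le_of_le_I (mul_pos hβ (by positivity)) hv.1.1 hSpos
      (fun t ht => by nlinarith [hSx t ht]) hAI
    have hAρ :
        y + x * k - k * (γ / β) = x - γ / β + y - γ / β * (log x - log (γ / β)) := by
      have : (x - γ / β) * k = x - γ / β - γ / β * (log x - log (γ / β)) := by
        rw [hk_def, mul_sub, mul_one, mul_div_cancel₀ _ hxρ.ne']
      linear_combination this
    rwa [hSI.1, hSv, show y + x * k - k * x = y by ring, hAρ] at this
  · have := hSI.le_time_of_I_le (A := x - γ / β + y) (k := (x - γ / β) / x)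
      (mul_pos hβ (by linarith)) hv.1.1 hSpos hIpos
      fun t ht => hI t ht ▸ sirOrbit_le hρ.le hx0 (hSpos t ht)
    have hAx : x - γ / β + y - (x - γ / β) / x * x = y := by field_simp; ring
    have hAρ : x - γ / β + y - (x - γ / β) / x * (γ / β) =
        x - γ / β + y + γ / β * (γ / (β * x) - 1) := by field_simp; ring
    rwa [hSI.1, hSv, hAx, hAρ] at this
end
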